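/- Let (X, d) be a proper, uniquely geodesic, straight metric space with basepoint b. For each ξ in the horoboundary, let Π_b(ξ) denote the unique geodesic ray γ based at b with ξ(γ(t)) = −t for all t ≥ 0. If (ξ_n) is a sequence in the horoboundary converging in C(X, ℝ) to a point ξ of the horoboundary, then Π_b(ξ_n) converges to Π_b(ξ) in D_b (uniformly on compact sets). -/

import Mathlib

open Filter Topology
open scoped NNReal ENNReal

variable {X : Type*} [MetricSpace X]

/-- `γ` restricted to the set `s ⊆ ℝ` is a (unit-speed) geodesic:
`dist (γ u) (γ v) = |u - v|` for all `u, v ∈ s`. -/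
def IsGeodesicOn (γ : ℝ → X) (s : Set ℝ) : Prop :=
  ∀ u ∈ s, ∀ v ∈ s, dist (γ u) (γ v) = |u - v|

/-- `X` is uniquely geodesic: any two distinct points are joined by a geodesic
parametrized on `[0, dist a c]`, and any two such geodesics agree on that interval. -/
def UniquelyGeodesic (X : Type*) [MetricSpace X] : Prop :=
  ∀ a c : X, a ≠ c →
    ∃ γ : ℝ → X,
      (IsGeodesicOn γ (Set.Icc 0 (dist a c)) ∧ γ 0 = a ∧ γ (dist a c) = c) ∧
        ∀ γ' : ℝ → X,
          (IsGeodesicOn γ' (Set.Icc 0 (dist a c)) ∧ γ' 0 = a ∧ γ' (dist a c) = c) →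
            Set.EqOn γ' γ (Set.Icc 0 (dist a c))

/-- `X` is straight: every geodesic defined on a nondegenerate closed interval extends to a
unique bi-infinite geodesic (an isometric embedding of `ℝ`). -/
def Straight (X : Type*) [MetricSpace X] : Prop :=
  ∀ (γ : ℝ → X) (a c : ℝ), a < c → IsGeodesicOn γ (Set.Icc a c) →
    ∃! γ' : ℝ → X, Isometry γ' ∧ Set.EqOn γ' γ (Set.Icc a c)

/-- The space `D_b` of geodesic rays based at `b`, as a subspace of `C(ℝ≥0, X)`
(with the compact-open topology, i.e. uniform convergence on compact sets). -/
abbrev GeodesicRay (X : Type*) [MetricSpace X] (b : X) :=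
  {γ : C(ℝ≥0, X) // Isometry ⇑γ ∧ γ 0 = b}

/-- The horofunction embedding `h : X → C(X, ℝ)`, `h x y = d(x, y) - d(x, b)`. -/
noncomputable def horo (b x : X) : C(X, ℝ) :=
  ⟨fun y => dist x y - dist x b,
    (continuous_const.dist continuous_id).sub continuous_const⟩

/-- The horoboundary of `X` (with basepoint `b`): the closure of `h(X)` in `C(X, ℝ)`
minus `h(X)`. -/
def horoboundary (b : X) : Set C(X, ℝ) :=
  closure (Set.range (horo b)) \ Set.range (horo b)

/-- The setoid on `D_b × M` identifying all points whose second coordinate is `0`. -/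
def collapseSetoid (X : Type*) [MetricSpace X] (b : X) (M : Type*) [Zero M] :
    Setoid (GeodesicRay X b × M) where
  r p q := p = q ∨ (p.2 = 0 ∧ q.2 = 0)
  iseqv := by
    refine ⟨fun _ => Or.inl rfl, ?_, ?_⟩
    · rintro p q (rfl | ⟨h1, h2⟩)
      · exact Or.inl rfl
      · exact Or.inr ⟨h2, h1⟩
    · rintro p q r (rfl | ⟨h1, h2⟩) (rfl | ⟨h3, h4⟩)
      · exact Or.inl rfl
      · exact Or.inr ⟨h3, h4⟩
      · exact Or.inr ⟨h1, h2⟩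
      · exact Or.inr ⟨h1, h4⟩

/-- The visual compactification `X̄_b = (D_b × [0, ∞]) / (D_b × {0})`. -/
abbrev VisualCompactification (X : Type*) [MetricSpace X] (b : X) :=
  Quotient (collapseSetoid X b ℝ≥0∞)

/-- `X` is C¹ along geodesics: for a bi-infinite geodesic `γ` and a point `p` off `γ`,
`t ↦ d(γ t, p)` is differentiable, and the derivative depends continuously on `(t, p)`. -/
def C1AlongGeodesics (X : Type*) [MetricSpace X] : Prop :=
  ∀ γ : ℝ → X, Isometry γ →
    (∀ p, p ∉ Set.range γ → ∀ t : ℝ, DifferentiableAt ℝ (fun s => dist (γ s) p) t) ∧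
      ContinuousOn (fun q : ℝ × X => deriv (fun s => dist (γ s) q.2) q.1)
        {q : ℝ × X | q.2 ∉ Set.range γ}

/-- `X` has constant distance variation: for distinct bi-infinite geodesics `γ, η` with
`γ 0 = η 0`, either `(d/dt) d(γ t, η s)|_{t=0}` exists for all `s > 0` and is independent
of `s`, or it exists for no `s > 0`. -/
def ConstantDistanceVariation (X : Type*) [MetricSpace X] : Prop :=
  ∀ γ η : ℝ → X, Isometry γ → Isometry η → γ 0 = η 0 → γ ≠ η →
    ((∀ s : ℝ, 0 < s → DifferentiableAt ℝ (fun t => dist (γ t) (η s)) 0) ∧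
        ∀ s s' : ℝ, 0 < s → 0 < s' →
          deriv (fun t => dist (γ t) (η s)) 0 = deriv (fun t => dist (γ t) (η s')) 0) ∨
      ∀ s : ℝ, 0 < s → ¬ DifferentiableAt ℝ (fun t => dist (γ t) (η s)) 0

/-!
A point `ξ` of the horoboundary is `1`-Lipschitz with `ξ b = 0`, and it takes the value `1` at
some point `z` of the unit sphere about `b`; so `ξ` decreases at unit speed along the geodesic
from `z` to `b`. Any geodesic issuing from `b` along which `ξ` also decreases at unit speed
continues this one geodesically, so by straightness it lies on the line through `z` and `b`.
Hence `γ t` is the only point `p` with `d(p, b) = t` and `ξ p = -t`. Every cluster point of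
`γₙ t` has this property, by joint continuity of evaluation, so `γₙ → γ` pointwise, and
pointwise convergence of the equicontinuous family of rays is uniform on compact sets.
-/

open Set Metric

theorem IsGeodesicOn.mono {γ : ℝ → X} {s t : Set ℝ} (h : IsGeodesicOn γ t) (hst : s ⊆ t) :
    IsGeodesicOn γ s :=
  fun u hu v hv => h u (hst hu) v (hst hv)

theorem Isometry.isGeodesicOn {γ : ℝ → X} (h : Isometry γ) (s : Set ℝ) : IsGeodesicOn γ s :=
  fun u _ v _ => by rw [h.dist_eq, Real.dist_eq]

theorem isGeodesicOn_of_le {γ : ℝ → X} {s : Set ℝ}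
    (h : ∀ u ∈ s, ∀ v ∈ s, u ≤ v → dist (γ u) (γ v) = v - u) : IsGeodesicOn γ s := by
  intro u hu v hv
  rcases le_total u v with huv | hvu
  · rw [h u hu v hv huv, abs_of_nonpos (sub_nonpos.2 huv), neg_sub]
  · rw [dist_comm, h v hv u hu hvu, abs_of_nonneg (sub_nonneg.2 hvu)]

theorem exists_isometry_of_ne (hU : UniquelyGeodesic X) (hS : Straight X) {a c : X}
    (h : a ≠ c) : ∃ L : ℝ → X, Isometry L ∧ L 0 = a ∧ L (dist a c) = c := by
  obtain ⟨g, ⟨hg, hg0, hgc⟩, -⟩ := hU a c h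
  obtain ⟨L, ⟨hL, hLg⟩, -⟩ := hS g 0 (dist a c) (dist_pos.2 h) hg
  exact ⟨L, hL, by rw [hLg ⟨le_rfl, dist_nonneg⟩, hg0], by rw [hLg ⟨dist_nonneg, le_rfl⟩, hgc]⟩

theorem Straight.eqOn_of_eqOn_Icc (hS : Straight X) {γ M : ℝ → X} (hM : Isometry M)
    {a a' c : ℝ} (haa' : a < a') (ha'c : a' ≤ c) (hγ : IsGeodesicOn γ (Icc a c))
    (h : EqOn γ M (Icc a a')) : EqOn γ M (Icc a c) := by
  obtain ⟨L, ⟨hL, hLγ⟩, -⟩ := hS γ a c (haa'.trans_le ha'c) hγ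
  have hsub : Icc a a' ⊆ Icc a c := Icc_subset_Icc_right ha'c
  obtain ⟨_, -, huniq⟩ := hS γ a a' haa' (hγ.mono hsub)
  have hLM : L = M := (huniq L ⟨hL, hLγ.mono hsub⟩).trans (huniq M ⟨hM, h.symm⟩).symm
  exact fun u hu => (hLγ hu).symm.trans (congrFun hLM u)

def IsCalibratedOn (f : X → ℝ) (γ : ℝ → X) (s : Set ℝ) : Prop :=
  ∀ u ∈ s, f (γ u) = -u

theorem IsCalibratedOn.of_isGeodesicOn {f : X → ℝ} (hf : LipschitzWith 1 f) {γ : ℝ → X}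
    {a c : ℝ} (hγ : IsGeodesicOn γ (Icc a c)) (ha : f (γ a) = -a) (hc : f (γ c) = -c) :
    IsCalibratedOn f γ (Icc a c) := by
  intro u hu
  have hac : a ≤ c := hu.1.trans hu.2
  have h₁ := hf.dist_le_mul (γ u) (γ c)
  have h₂ := hf.dist_le_mul (γ a) (γ u)
  rw [hγ u hu c ⟨hac, le_rfl⟩, abs_of_nonpos (by linarith [hu.2]), Real.dist_eq] at h₁
  rw [hγ a ⟨le_rfl, hac⟩ u hu, abs_of_nonpos (by linarith [hu.1]), Real.dist_eq] at h₂
  rw [NNReal.coe_one, one_mul, abs_le] at h₁ h₂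
  linarith [h₁.2, h₂.1]

theorem IsCalibratedOn.abs_sub_le_dist {f : X → ℝ} (hf : LipschitzWith 1 f) {γ : ℝ → X}
    {s : Set ℝ} (hγ : IsCalibratedOn f γ s) {u v : ℝ} (hu : u ∈ s) (hv : v ∈ s) :
    |u - v| ≤ dist (γ u) (γ v) := by
  have h := hf.dist_le_mul (γ u) (γ v)
  rwa [NNReal.coe_one, one_mul, Real.dist_eq, hγ u hu, hγ v hv, neg_sub_neg, abs_sub_comm] at h

theorem IsCalibratedOn.isGeodesicOn_ite {f : X → ℝ} (hf : LipschitzWith 1 f) {σ c : ℝ → X}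
    {a t : ℝ} (hσ : IsGeodesicOn σ (Icc a 0)) (hc : IsGeodesicOn c (Icc 0 t))
    (hfσ : IsCalibratedOn f σ (Icc a 0)) (hfc : IsCalibratedOn f c (Icc 0 t)) (h0 : σ 0 = c 0) :
    IsGeodesicOn (fun w => if w ≤ 0 then σ w else c w) (Icc a t) := by
  set γ := fun w => if w ≤ 0 then σ w else c w
  have hcal : IsCalibratedOn f γ (Icc a t) := fun w hw => by
    by_cases hw0 : w ≤ 0
    · simp only [γ, if_pos hw0, hfσ w ⟨hw.1, hw0⟩]
    · simp only [γ, if_neg hw0, hfc w ⟨le_of_not_ge hw0, hw.2⟩]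
  refine isGeodesicOn_of_le fun u hu v hv huv => ?_
  by_cases hv0 : v ≤ 0
  · have hu' : u ∈ Icc a 0 := ⟨hu.1, huv.trans hv0⟩
    have hv' : v ∈ Icc a 0 := ⟨hv.1, hv0⟩
    simp only [γ, if_pos hu'.2, if_pos hv0, hσ u hu' v hv', abs_sub_comm u v,
      abs_of_nonneg (sub_nonneg.2 huv)]
  have hv' : v ∈ Icc 0 t := ⟨le_of_not_ge hv0, hv.2⟩
  by_cases hu0 : u ≤ 0
  · have hu' : u ∈ Icc a 0 := ⟨hu.1, hu0⟩
    refine le_antisymm ?_ ?_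
    · calc dist (γ u) (γ v) ≤ dist (σ u) (σ 0) + dist (c 0) (c v) := by
            simp only [γ, if_pos hu0, if_neg hv0]
            exact h0 ▸ dist_triangle _ _ _
        _ = v - u := by
          rw [hσ u hu' 0 ⟨hu.1.trans hu0, le_rfl⟩, hc 0 ⟨le_rfl, hv'.1.trans hv'.2⟩ v hv',
            sub_zero, zero_sub, abs_neg, abs_of_nonpos hu0, abs_of_nonneg hv'.1]
          ring
    · simpa only [abs_sub_comm u v, abs_of_nonneg (sub_nonneg.2 huv)]
        using hcal.abs_sub_le_dist hf hu hv
  · have hu' : u ∈ Icc 0 t := ⟨le_of_not_ge hu0, hu.2⟩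
    simp only [γ, if_neg hu0, if_neg hv0, hc u hu' v hv', abs_sub_comm u v,
      abs_of_nonneg (sub_nonneg.2 huv)]

theorem IsCalibratedOn.eqOn_of_isometry (hS : Straight X) {f : X → ℝ} (hf : LipschitzWith 1 f)
    {M : ℝ → X} (hM : Isometry M) (hfM : IsCalibratedOn f M (Icc (-1) 0)) {c : ℝ → X} {t : ℝ}
    (ht : 0 ≤ t) (hc : IsGeodesicOn c (Icc 0 t)) (hfc : IsCalibratedOn f c (Icc 0 t))
    (hc0 : c 0 = M 0) : EqOn c M (Icc 0 t) := by
  have hγ := hfM.isGeodesicOn_ite hf (hM.isGeodesicOn _) hc hfc hc0.symm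
  have hγM := hS.eqOn_of_eqOn_Icc hM (by norm_num) ht hγ fun w hw => if_pos hw.2
  intro v hv
  rcases hv.1.eq_or_lt with rfl | hv0
  · exact hc0
  · simpa only [if_neg hv0.not_ge] using hγM ⟨by linarith, hv.2⟩

theorem IsCalibratedOn.eq_of_dist_eq (hU : UniquelyGeodesic X) (hS : Straight X) {f : X → ℝ}
    (hf : LipschitzWith 1 f) {M : ℝ → X} (hM : Isometry M) (hfM : IsCalibratedOn f M (Icc (-1) 0))
    {p : X} {t : ℝ} (hp : dist (M 0) p = t) (hfp : f p = -t) : p = M t := by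
  subst hp
  rcases eq_or_ne (M 0) p with rfl | hne
  · rw [dist_self]
  obtain ⟨L, hL, hL0, hLp⟩ := exists_isometry_of_ne hU hS hne
  have hfL : IsCalibratedOn f L (Icc 0 (dist (M 0) p)) :=
    .of_isGeodesicOn hf (hL.isGeodesicOn _) (by rw [hL0, hfM 0 ⟨by norm_num, le_rfl⟩, neg_zero])
      (by rw [hLp, hfp])
  rw [← hfM.eqOn_of_isometry hS hf hM dist_nonneg (hL.isGeodesicOn _) hfL hL0
    ⟨dist_nonneg, le_rfl⟩, hLp]

theorem lipschitzWith_one_of_mem_closure_range_horo {b : X} {ξ : C(X, ℝ)}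
    (hξ : ξ ∈ closure (range (horo b))) : LipschitzWith 1 ξ := by
  refine closure_minimal (t := {f : C(X, ℝ) | LipschitzWith 1 f}) ?_
    ((isClosed_setOfPred_lipschitzWith 1).preimage continuous_coeFun) hξ
  rintro _ ⟨x, rfl⟩
  refine LipschitzWith.of_le_add fun y y' => ?_
  simp only [horo, ContinuousMap.coe_mk]
  linarith [dist_triangle x y' y, dist_comm y' y]

theorem apply_eq_zero_of_mem_closure_range_horo {b : X} {ξ : C(X, ℝ)}
    (hξ : ξ ∈ closure (range (horo b))) : ξ b = 0 := by
  refine closure_minimal (t := {f : C(X, ℝ) | f b = 0}) ?_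
    (isClosed_eq (continuous_eval_const b) continuous_const) hξ
  rintro _ ⟨x, rfl⟩
  exact sub_self _

theorem exists_mem_sphere_horo_eq_one (hU : UniquelyGeodesic X) (hS : Straight X) {b x : X}
    (hx : x ≠ b) : ∃ a ∈ sphere b 1, horo b x a = 1 := by
  obtain ⟨L, hL, hL0, hLx⟩ := exists_isometry_of_ne hU hS hx.symm
  refine ⟨L (-1), ?_, ?_⟩
  · rw [mem_sphere, ← hL0, hL.dist_eq, Real.dist_eq]
    norm_num
  · simp only [horo, ContinuousMap.coe_mk]
    rw [← hLx, hL.dist_eq, Real.dist_eq, hLx, dist_comm x b,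
      abs_of_nonneg (by linarith [dist_nonneg (x := b) (y := x)])]
    ring

/-- Otherwise `ξ` has the neighbourhood `{f | f < 1 on the sphere} \ {h b}`, which contains some
`h x` with `x ≠ b`; but `h x` is `1` at the point of the sphere opposite to `x` across `b`. -/
theorem exists_mem_sphere_apply_eq_one [ProperSpace X] (hU : UniquelyGeodesic X)
    (hS : Straight X) {b : X} {ξ : C(X, ℝ)} (hξ : ξ ∈ horoboundary b) :
    ∃ z ∈ sphere b 1, ξ z = 1 := by
  by_contra! h
  have hlt : MapsTo ξ (sphere b 1) (Iio 1) := fun z hz => by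
    have hle := (lipschitzWith_one_of_mem_closure_range_horo hξ.1).dist_le_mul z b
    rw [NNReal.coe_one, one_mul, mem_sphere.1 hz, Real.dist_eq,
      apply_eq_zero_of_mem_closure_range_horo hξ.1, sub_zero] at hle
    exact lt_of_le_of_ne (le_abs_self _ |>.trans hle) (h z hz)
  have hopen : IsOpen ({f : C(X, ℝ) | MapsTo f (sphere b 1) (Iio 1)} ∩ {horo b b}ᶜ) :=
    (ContinuousMap.isOpen_setOfPred_mapsTo (isCompact_sphere b 1) isOpen_Iio).inter
      isClosed_singleton.isOpen_compl
  obtain ⟨_, ⟨hmaps, hne⟩, x, rfl⟩ :=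
    mem_closure_iff.1 hξ.1 _ hopen ⟨hlt, fun hb => hξ.2 ⟨b, hb.symm⟩⟩
  obtain ⟨a, ha, ha1⟩ := exists_mem_sphere_horo_eq_one hU hS fun hxb : x = b => hne (hxb ▸ rfl)
  exact (hmaps ha).ne ha1

theorem exists_isometry_isCalibratedOn [ProperSpace X] (hU : UniquelyGeodesic X)
    (hS : Straight X) {b : X} {ξ : C(X, ℝ)} (hξ : ξ ∈ horoboundary b) :
    ∃ M : ℝ → X, Isometry M ∧ M 0 = b ∧ IsCalibratedOn ξ M (Icc (-1) 0) := by
  obtain ⟨z, hz, hξz⟩ := exists_mem_sphere_apply_eq_one hU hS hξ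
  have hbz : b ≠ z := fun hbz => by simp [← hbz] at hz
  obtain ⟨L, hL, hL0, hLz⟩ := exists_isometry_of_ne hU hS hbz
  rw [dist_comm, mem_sphere.1 hz] at hLz
  have hM : Isometry fun u => L (-u) := hL.comp (IsometryEquiv.neg ℝ).isometry
  refine ⟨_, hM, by simpa using hL0, .of_isGeodesicOn
    (lipschitzWith_one_of_mem_closure_range_horo hξ.1) (hM.isGeodesicOn _) (by simp [hLz, hξz]) ?_⟩
  simp [hL0, apply_eq_zero_of_mem_closure_range_horo hξ.1]

theorem ContinuousMap.tendsto_of_equicontinuous {α β ι : Type*} [TopologicalSpace α]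
    [UniformSpace β] {F : ι → C(α, β)} {f : C(α, β)} {l : Filter ι}
    (hF : Equicontinuous fun i => ⇑(F i)) (h : ∀ x, Tendsto (fun i => F i x) l (𝓝 (f x))) :
    Tendsto F l (𝓝 f) := by
  rw [isUniformEmbedding_toUniformOnFunIsCompact.isInducing.tendsto_nhds_iff]
  exact (EquicontinuousOn.tendsto_uniformOnFun_iff_pi (fun _ hK => hK)
    (sUnion_eq_univ_iff.2 fun x => ⟨{x}, isCompact_singleton, rfl⟩)
    (fun K _ => hF.equicontinuousOn K) l f).2 (tendsto_pi_nhds.2 h)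

theorem tendsto_of_forall_apply_eq [LocallyCompactSpace X] {Y : Type*} [TopologicalSpace Y]
    [T2Space Y] {F : ℕ → C(X, Y)} {f : C(X, Y)} (hF : Tendsto F atTop (𝓝 f)) {K : Set X}
    (hK : IsCompact K) {x : ℕ → X} (hxK : ∀ n, x n ∈ K) {c : Y} (hx : ∀ n, F n (x n) = c)
    {y : X} (hy : ∀ p ∈ K, f p = c → p = y) : Tendsto x atTop (𝓝 y) := by
  refine hK.tendsto_nhds_of_unique_mapClusterPt (.of_forall hxK) fun p hpK hp => hy p hpK ?_
  obtain ⟨ψ, hψ, hxψ⟩ := hp.tendsto_subseq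
  have hlim := (continuous_eval.tendsto (f, p)).comp
    ((hF.comp hψ.tendsto_atTop).prodMk_nhds hxψ)
  refine tendsto_nhds_unique hlim ?_
  simpa only [Function.comp_def, hx] using tendsto_const_nhds

theorem GeodesicRay.dist_apply_base {b : X} (γ : GeodesicRay X b) (t : ℝ≥0) :
    dist (γ.1 t) b = t := by
  obtain ⟨γ, hγ, rfl⟩ := γ
  rw [hγ.dist_eq, NNReal.dist_eq, NNReal.coe_zero, sub_zero, abs_of_nonneg t.coe_nonneg]

theorem statement7_general [ProperSpace X] (hU : UniquelyGeodesic X) (hS : Straight X) (b : X)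
    (ξn : ℕ → C(X, ℝ))
    (ξ : C(X, ℝ)) (hξ : ξ ∈ horoboundary b)
    (hconv : Tendsto ξn atTop (𝓝 ξ))
    (γn : ℕ → GeodesicRay X b)
    (hopt : ∀ n, ∀ t : ℝ≥0, ξn n ((γn n).1 t) = -(t : ℝ))
    (γ : GeodesicRay X b) (hγ : ∀ t : ℝ≥0, ξ (γ.1 t) = -(t : ℝ)) :
    Tendsto γn atTop (𝓝 γ) := by
  obtain ⟨M, hM, hM0, hξM⟩ := exists_isometry_isCalibratedOn hU hS hξ
  have hcalibrated : ∀ (t : ℝ) (p : X), dist p b = t → ξ p = -t → p = M t := fun t p hp hξp =>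
    hξM.eq_of_dist_eq hU hS (lipschitzWith_one_of_mem_closure_range_horo hξ.1) hM
      (by rw [hM0, dist_comm, hp]) hξp
  have hpointwise (t : ℝ≥0) : Tendsto (fun n => (γn n).1 t) atTop (𝓝 (γ.1 t)) :=
    tendsto_of_forall_apply_eq hconv (isCompact_sphere b t)
      (fun n => mem_sphere.2 ((γn n).dist_apply_base t)) (fun n => hopt n t)
      fun p hp hξp => (hcalibrated t p hp hξp).trans
        (hcalibrated t _ (γ.dist_apply_base t) (hγ t)).symm
  rw [tendsto_subtype_rng]
  exact ContinuousMap.tendsto_of_equicontinuous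
    (LipschitzWith.uniformEquicontinuous _ 1 fun n => (γn n).2.1.lipschitz).equicontinuous
    hpointwise

/-- The projection `Π_b` from the horoboundary to `D_b` (sending `ξ` to the unique
ray `γ` based at `b` with `ξ (γ t) = -t`) is sequentially continuous: if `ξ_n → ξ` in
`C(X, ℝ)` within the horoboundary, then the corresponding rays converge in `D_b`. -/
theorem statement7 [ProperSpace X] (hU : UniquelyGeodesic X) (hS : Straight X) (b : X)
    (ξn : ℕ → C(X, ℝ)) (hξn : ∀ n, ξn n ∈ horoboundary b)
    (ξ : C(X, ℝ)) (hξ : ξ ∈ horoboundary b)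
    (hconv : Tendsto ξn atTop (𝓝 ξ))
    (γn : ℕ → GeodesicRay X b)
    (hopt : ∀ n, ∀ t : ℝ≥0, ξn n ((γn n).1 t) = -(t : ℝ))
    (γ : GeodesicRay X b) (hγ : ∀ t : ℝ≥0, ξ (γ.1 t) = -(t : ℝ)) :
    Tendsto γn atTop (𝓝 γ) :=
  statement7_general hU hS b ξn ξ hξ hconv γn hopt γ hγ
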